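/- Let X be a compact metric space, T : X → X continuous, Λ ⊆ M(X,T) nonempty compact, and f ∈ C(X). Then the function β^Λ : C(X, GL_d(ℝ)) → ℝ is continuous at the cocycle e^f I_d : x ↦ e^{f(x)} Id. -/

import Mathlib

open MeasureTheory Topology Filter Set

noncomputable section

/-- Operator space of d×d real matrices, realized as continuous linear endomorphisms
of Euclidean space with the operator norm. -/
abbrev Md (d : ℕ) := EuclideanSpace ℝ (Fin d) →L[ℝ] EuclideanSpace ℝ (Fin d)

/-- The space `C(X, GL_d(ℝ))` of continuous `GL_d(ℝ)`-valued maps, encoded as pairs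
`(A, A⁻¹)` of continuous matrix-valued maps that are pointwise mutually inverse.
The metric (inherited from the product of sup metrics) induces the same topology as
`ρ(A,B) = max_x (‖A x - B x‖ + ‖A x⁻¹ - B x⁻¹‖)`. -/
def GLC (X : Type*) [TopologicalSpace X] (d : ℕ) : Type _ :=
  {p : C(X, Md d) × C(X, Md d) // ∀ x, p.1 x * p.2 x = 1 ∧ p.2 x * p.1 x = 1}

instance (X : Type*) [TopologicalSpace X] [CompactSpace X] (d : ℕ) :
    MetricSpace (GLC X d) := by
  delta GLC; infer_instance

/-- The metric ρ of the paper. -/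
def rho {X : Type*} [TopologicalSpace X] [CompactSpace X] {d : ℕ} (A B : GLC X d) : ℝ :=
  ⨆ x : X, (‖A.1.1 x - B.1.1 x‖ + ‖A.1.2 x - B.1.2 x‖)

/-- The cocycle `A(n,x) = A(T^{n-1} x) ⋯ A(x)`. -/
def coc {X : Type*} [TopologicalSpace X] {d : ℕ} (T : X → X) (A : GLC X d) :
    ℕ → X → Md d
  | 0, _ => 1
  | n + 1, x => coc T A n (T x) * A.1.1 x

/-- The average `(1/n) ∫ log ‖A(n,x)‖ dμ`. -/
def lyapAvg {X : Type*} [TopologicalSpace X] [MeasurableSpace X] {d : ℕ}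
    (T : X → X) (A : GLC X d) (μ : ProbabilityMeasure X) (n : ℕ) : ℝ :=
  (n : ℝ)⁻¹ * ∫ x, Real.log ‖coc T A n x‖ ∂(μ : Measure X)

/-- `inf_{n ≥ 1} (1/n) ∫ log ‖A(n,x)‖ dμ`. -/
def lyapExp {X : Type*} [TopologicalSpace X] [MeasurableSpace X] {d : ℕ}
    (T : X → X) (A : GLC X d) (μ : ProbabilityMeasure X) : ℝ :=
  ⨅ n : {n : ℕ // 1 ≤ n}, lyapAvg T A μ n

/-- `β^Λ(A)`, the maximum ergodic average over Λ. -/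
def betaL {X : Type*} [TopologicalSpace X] [MeasurableSpace X] {d : ℕ}
    (T : X → X) (Λ : Set (ProbabilityMeasure X)) (A : GLC X d) : ℝ :=
  ⨆ μ : Λ, lyapExp T A μ

/-- `M^Λ_max(A)`, the set of maximizing measures over Λ. -/
def MmaxL {X : Type*} [TopologicalSpace X] [MeasurableSpace X] {d : ℕ}
    (T : X → X) (Λ : Set (ProbabilityMeasure X)) (A : GLC X d) :
    Set (ProbabilityMeasure X) :=
  {μ | μ ∈ Λ ∧ lyapExp T A μ = betaL T Λ A}

/-- The set of T-invariant Borel probability measures `M(X,T)`. -/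
def invM {X : Type*} [TopologicalSpace X] [MeasurableSpace X]
    (T : X → X) : Set (ProbabilityMeasure X) :=
  {μ | (μ : Measure X).map T = (μ : Measure X)}

set_option synthInstance.maxHeartbeats 1000000 in
/-- The scaled cocycle `x ↦ e^{g x} A(x)`. -/
def scale {X : Type*} [TopologicalSpace X] {d : ℕ} (g : C(X, ℝ)) (A : GLC X d) :
    GLC X d :=
  ⟨(⟨fun x => Real.exp (g x) • A.1.1 x, by fun_prop⟩,
    ⟨fun x => Real.exp (-(g x)) • A.1.2 x, by fun_prop⟩), by
    intro x
    obtain ⟨h1, h2⟩ := A.2 x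
    constructor <;>
      · dsimp only [ContinuousMap.coe_mk]
        ext v
        have hv1 := congrFun (congrArg DFunLike.coe h1) v
        have hv2 := congrFun (congrArg DFunLike.coe h2) v
        simp only [ContinuousLinearMap.mul_apply, ContinuousLinearMap.one_apply]
          at hv1 hv2 ⊢
        simp only [ContinuousLinearMap.smul_apply, _root_.map_smul, smul_smul]
        simp [hv1, hv2, ← mul_assoc, ← Real.exp_add]⟩

/-- The identity cocycle `x ↦ I_d`. -/
def idC (X : Type*) [TopologicalSpace X] (d : ℕ) : GLC X d :=
  ⟨(ContinuousMap.const X 1, ContinuousMap.const X 1), fun _ => by simp⟩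

/-- The set of Lyapunov-irregular points of A. -/
def LI {X : Type*} [TopologicalSpace X] {d : ℕ} (T : X → X) (A : GLC X d) : Set X :=
  {x | ¬ ∃ c : ℝ, Tendsto (fun n : ℕ => (n : ℝ)⁻¹ * Real.log ‖coc T A n x‖)
    atTop (𝓝 c)}


/-! If `‖B(x)‖ ≤ e^{f(x)+ε}` and `‖B(x)⁻¹‖ ≤ e^{-f(x)+ε}` everywhere, then
`e^{S_n f(x) - nε} ≤ ‖B(n,x)‖ ≤ e^{S_n f(x) + nε}` for the Birkhoff sums `S_n f`, the lower bound
because no `B(x)` shrinks a vector by more than `e^{-f(x)-ε}`. Integrating the logarithm against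
an invariant `μ` gives `|(1/n) ∫ log ‖B(n,·)‖ dμ - ∫ f dμ| ≤ ε` for every `n ≥ 1`, hence
`|β^Λ(B) - sup_{μ ∈ Λ} ∫ f dμ| ≤ ε`. Both norm bounds hold for all `B` near `e^f I_d`, and with
`ε = 0` for `e^f I_d` itself. -/

open Real

lemma abs_ciSup_sub_ciSup_le {ι : Sort*} {u v : ι → ℝ} {ε : ℝ} (hε : 0 ≤ ε)
    (hv : BddAbove (range v)) (h : ∀ i, |u i - v i| ≤ ε) : |(⨆ i, u i) - ⨆ i, v i| ≤ ε := by
  cases isEmpty_or_nonempty ι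
  · simpa [Real.iSup_of_isEmpty] using hε
  obtain ⟨b, hb⟩ := hv
  have hu : BddAbove (range u) :=
    ⟨b + ε, forall_mem_range.2 fun i => by linarith [(abs_le.1 (h i)).2, hb (mem_range_self i)]⟩
  refine abs_sub_le_iff.2 ⟨?_, ?_⟩ <;> rw [sub_le_iff_le_add]
  · exact ciSup_le fun i => by
      linarith [(abs_le.1 (h i)).2, le_ciSup ⟨b, hb⟩ i]
  · exact ciSup_le fun i => by
      linarith [(abs_le.1 (h i)).1, le_ciSup hu i]

lemma MeasureTheory.MeasurePreserving.integral_birkhoffSum {α G : Type*} [MeasurableSpace α]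
    [NormedAddCommGroup G] [NormedSpace ℝ G] {μ : Measure α} {T : α → α}
    (hT : MeasurePreserving T μ μ) {g : α → G} (hg : Integrable g μ) (n : ℕ) :
    ∫ x, birkhoffSum T g n x ∂μ = n • ∫ x, g x ∂μ := by
  have hcomp : ∀ k, ∫ x, g (T^[k] x) ∂μ = ∫ x, g x ∂μ := fun k => by
    have hk := hT.iterate k
    calc ∫ x, g (T^[k] x) ∂μ = ∫ y, g y ∂(μ.map T^[k]) :=
          (integral_map hk.aemeasurable (by rw [hk.map_eq]; exact hg.1)).symm
      _ = ∫ x, g x ∂μ := by rw [hk.map_eq]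
  have hint : ∀ k ∈ Finset.range n, Integrable (fun x => g (T^[k] x)) μ :=
    fun k _ => (hT.iterate k).integrable_comp_of_integrable hg
  simp only [birkhoffSum]
  rw [integral_finsetSum _ hint]
  simp [hcomp]

lemma ContinuousMap.integral_le_norm {X : Type*} [TopologicalSpace X] [CompactSpace X]
    [MeasurableSpace X] (f : C(X, ℝ)) (μ : ProbabilityMeasure X) :
    ∫ x, f x ∂(μ : Measure X) ≤ ‖f‖ := by
  simpa using (le_abs_self _).trans (norm_integral_le_of_norm_le_const
    (μ := (μ : Measure X)) (Eventually.of_forall f.norm_coe_le_norm))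

lemma eventually_forall_norm_le_exp_add {X : Type*} [TopologicalSpace X] [CompactSpace X]
    {E : Type*} [NormedAddCommGroup E]
    {a : C(X, E)} {g : C(X, ℝ)} (ha : ∀ x, ‖a x‖ ≤ exp (g x)) {ε : ℝ} (hε : 0 < ε) :
    ∀ᶠ b in 𝓝 a, ∀ x, ‖b x‖ ≤ exp (g x + ε) := by
  have hε' : 0 < exp ε - 1 := by linarith [add_one_lt_exp hε.ne']
  refine Metric.eventually_nhds_iff.2 ⟨(exp ε - 1) * exp (-‖g‖), by positivity, ?_⟩
  intro b hb x
  have hgx : exp (-‖g‖) ≤ exp (g x) :=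
    exp_le_exp.2 (neg_le_of_abs_le ((Real.norm_eq_abs _).symm.trans_le (g.norm_coe_le_norm x)))
  calc ‖b x‖ ≤ ‖a x‖ + ‖b x - a x‖ := norm_le_norm_add_norm_sub' _ _
    _ ≤ exp (g x) + (exp ε - 1) * exp (g x) := by
        gcongr
        · exact ha x
        · rw [← dist_eq_norm]
          exact ((ContinuousMap.dist_apply_le_dist x).trans hb.le).trans (by gcongr)
    _ = exp (g x + ε) := by rw [exp_add]; ring

section Cocycle

variable {X : Type*} [TopologicalSpace X] {d : ℕ} {T : X → X} {B : GLC X d}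

lemma continuous_coc (hT : Continuous T) (B : GLC X d) (n : ℕ) : Continuous (coc T B n) := by
  induction n with
  | zero => exact continuous_const
  | succ n ih => exact (ih.comp hT).mul B.1.1.continuous

lemma norm_coc_le_exp_birkhoffSum {g : X → ℝ} (hB : ∀ x, ‖B.1.1 x‖ ≤ exp (g x)) (n : ℕ)
    (x : X) : ‖coc T B n x‖ ≤ exp (birkhoffSum T g n x) := by
  induction n generalizing x with
  | zero =>
    rw [birkhoffSum_zero, exp_zero]
    exact ContinuousLinearMap.norm_id_le
  | succ n ih =>
    calc ‖coc T B (n + 1) x‖ ≤ ‖coc T B n (T x)‖ * ‖B.1.1 x‖ := norm_mul_le _ _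
      _ ≤ exp (birkhoffSum T g n (T x)) * exp (g x) := by gcongr; exacts [ih _, hB x]
      _ = exp (birkhoffSum T g (n + 1) x) := by rw [birkhoffSum_succ', add_comm, exp_add]

lemma exp_neg_mul_norm_le_norm_apply {g : X → ℝ} (hB : ∀ x, ‖B.1.2 x‖ ≤ exp (g x)) (x : X)
    (v : EuclideanSpace ℝ (Fin d)) : exp (-g x) * ‖v‖ ≤ ‖B.1.1 x v‖ := by
  have hv : ‖v‖ ≤ exp (g x) * ‖B.1.1 x v‖ :=
    calc ‖v‖ = ‖(B.1.2 x * B.1.1 x) v‖ := by rw [(B.2 x).2]; rfl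
      _ ≤ ‖B.1.2 x‖ * ‖B.1.1 x v‖ := (B.1.2 x).le_opNorm _
      _ ≤ exp (g x) * ‖B.1.1 x v‖ := by gcongr; exact hB x
  rwa [exp_neg, inv_mul_le_iff₀ (exp_pos _)]

lemma exp_neg_birkhoffSum_mul_norm_le_norm_coc_apply {g : X → ℝ}
    (hB : ∀ x, ‖B.1.2 x‖ ≤ exp (g x)) (n : ℕ) (x : X) (v : EuclideanSpace ℝ (Fin d)) :
    exp (-birkhoffSum T g n x) * ‖v‖ ≤ ‖coc T B n x v‖ := by
  induction n generalizing x v with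
  | zero => simp [coc]
  | succ n ih =>
    calc exp (-birkhoffSum T g (n + 1) x) * ‖v‖
        = exp (-birkhoffSum T g n (T x)) * (exp (-g x) * ‖v‖) := by
          rw [birkhoffSum_succ', neg_add, exp_add]; ring
      _ ≤ exp (-birkhoffSum T g n (T x)) * ‖B.1.1 x v‖ := by
          gcongr; exact exp_neg_mul_norm_le_norm_apply hB x v
      _ ≤ ‖coc T B (n + 1) x v‖ := ih _ _

lemma exp_neg_birkhoffSum_le_norm_coc [NeZero d] {g : X → ℝ}
    (hB : ∀ x, ‖B.1.2 x‖ ≤ exp (g x)) (n : ℕ) (x : X) :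
    exp (-birkhoffSum T g n x) ≤ ‖coc T B n x‖ := by
  obtain ⟨v, hv⟩ := exists_ne (0 : EuclideanSpace ℝ (Fin d))
  exact le_of_mul_le_mul_right
    ((exp_neg_birkhoffSum_mul_norm_le_norm_coc_apply hB n x v).trans ((coc T B n x).le_opNorm v))
    (norm_pos_iff.2 hv)

def ExpNormBounds (f : X → ℝ) (ε : ℝ) (B : GLC X d) : Prop :=
  ∀ x, ‖B.1.1 x‖ ≤ exp (f x + ε) ∧ ‖B.1.2 x‖ ≤ exp (-f x + ε)

lemma ExpNormBounds.abs_log_norm_coc_sub_birkhoffSum_le [NeZero d] {f : X → ℝ} {ε : ℝ}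
    (h : ExpNormBounds f ε B) (n : ℕ) (x : X) :
    |log ‖coc T B n x‖ - birkhoffSum T f n x| ≤ n * ε := by
  have hsum : ∀ g : X → ℝ, birkhoffSum T (fun y => g y + ε) n x = birkhoffSum T g n x + n * ε :=
    fun g => by simp [birkhoffSum, Finset.sum_add_distrib]
  have hup := norm_coc_le_exp_birkhoffSum (T := T) (fun y => (h y).1) n x
  have hlo := exp_neg_birkhoffSum_le_norm_coc (T := T) (fun y => (h y).2) n x
  rw [hsum] at hup hlo
  have hpos : 0 < ‖coc T B n x‖ := (exp_pos _).trans_le hlo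
  rw [abs_le]
  constructor
  · have hneg : birkhoffSum T (fun y => -f y) n x = -birkhoffSum T f n x :=
      birkhoffSum_neg T f n x
    have := (le_log_iff_exp_le hpos).2 hlo
    linarith
  · have := (log_le_iff_le_exp hpos).2 hup
    linarith

end Cocycle

section Integral

variable {X : Type*} [TopologicalSpace X] [CompactSpace X] [MeasurableSpace X]
  [BorelSpace X] {d : ℕ} {T : X → X} {B : GLC X d} {f : C(X, ℝ)} {ε : ℝ}

lemma ExpNormBounds.abs_lyapAvg_sub_integral_le [NeZero d] (hT : Continuous T)
    {μ : ProbabilityMeasure X} (hμ : μ ∈ invM T) (h : ExpNormBounds f ε B) {n : ℕ}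
    (hn : n ≠ 0) : |lyapAvg T B μ n - ∫ x, f x ∂(μ : Measure X)| ≤ ε := by
  have hμT : MeasurePreserving T μ μ := ⟨hT.measurable, hμ⟩
  have hf : Integrable f (μ : Measure X) :=
    f.continuous.integrable_of_hasCompactSupport (HasCompactSupport.of_compactSpace _)
  have hpos : ∀ x, 0 < ‖coc T B n x‖ := fun x =>
    (exp_pos _).trans_le (exp_neg_birkhoffSum_le_norm_coc (fun y => (h y).2) n x)
  have hlog : Integrable (fun x => log ‖coc T B n x‖) (μ : Measure X) :=
    ((continuous_coc hT B n).norm.log fun x => (hpos x).ne').integrable_of_hasCompactSupport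
      (HasCompactSupport.of_compactSpace _)
  have hS : Integrable (birkhoffSum T f n) (μ : Measure X) :=
    integrable_finsetSum _ fun k _ => (hμT.iterate k).integrable_comp_of_integrable hf
  have key : |∫ x, log ‖coc T B n x‖ ∂(μ : Measure X) - n * ∫ x, f x ∂(μ : Measure X)|
      ≤ n * ε := by
    rw [← nsmul_eq_mul, ← hμT.integral_birkhoffSum hf n, ← integral_sub hlog hS]
    simpa using norm_integral_le_of_norm_le_const (μ := (μ : Measure X))
      (Eventually.of_forall fun x =>
        (Real.norm_eq_abs _).trans_le (h.abs_log_norm_coc_sub_birkhoffSum_le (T := T) n x))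
  have hn' : (0 : ℝ) < n := by positivity
  have hsplit : lyapAvg T B μ n - ∫ x, f x ∂(μ : Measure X) = (n : ℝ)⁻¹ *
      (∫ x, log ‖coc T B n x‖ ∂(μ : Measure X) - n * ∫ x, f x ∂(μ : Measure X)) := by
    rw [lyapAvg]; field_simp
  rw [hsplit, abs_mul, abs_inv, Nat.abs_cast, inv_mul_le_iff₀ hn']
  exact key

lemma ExpNormBounds.abs_lyapExp_sub_integral_le [NeZero d] (hT : Continuous T)
    {μ : ProbabilityMeasure X} (hμ : μ ∈ invM T) (h : ExpNormBounds f ε B) :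
    |lyapExp T B μ - ∫ x, f x ∂(μ : Measure X)| ≤ ε := by
  have hn : ∀ n : {n : ℕ // 1 ≤ n},
      |lyapAvg T B μ n - ∫ x, f x ∂(μ : Measure X)| ≤ ε := fun n =>
    h.abs_lyapAvg_sub_integral_le hT hμ (Nat.one_le_iff_ne_zero.1 n.2)
  have hbdd : BddBelow (range fun n : {n : ℕ // 1 ≤ n} => lyapAvg T B μ n) :=
    ⟨_, forall_mem_range.2 fun n => sub_le_comm.1 (abs_sub_le_iff.1 (hn n)).2⟩
  refine abs_sub_le_iff.2 ⟨?_, ?_⟩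
  · exact (sub_le_sub_right (ciInf_le hbdd ⟨1, le_rfl⟩) _).trans (abs_sub_le_iff.1 (hn _)).1
  · exact sub_le_comm.1 (le_ciInf fun n => sub_le_comm.1 (abs_sub_le_iff.1 (hn n)).2)

lemma ExpNormBounds.abs_betaL_sub_iSup_integral_le [NeZero d] (hT : Continuous T)
    {Λ : Set (ProbabilityMeasure X)} (hΛ : Λ ⊆ invM T) (h : ExpNormBounds f ε B)
    (hε : 0 ≤ ε) :
    |betaL T Λ B - ⨆ μ : Λ, ∫ x, f x ∂((μ : ProbabilityMeasure X) : Measure X)| ≤ ε :=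
  abs_ciSup_sub_ciSup_le hε ⟨‖f‖, forall_mem_range.2 fun μ => f.integral_le_norm μ⟩
    fun μ => h.abs_lyapExp_sub_integral_le hT (hΛ μ.2)

end Integral

section ScalarCocycle

variable {X : Type*} [TopologicalSpace X] {d : ℕ}

lemma expNormBounds_scale_idC (f : C(X, ℝ)) : ExpNormBounds f 0 (scale f (idC X d)) := by
  have hone : ‖(1 : Md d)‖ ≤ 1 := ContinuousLinearMap.norm_id_le
  refine fun x => ⟨?_, ?_⟩ <;>
  · simp only [scale, idC, ContinuousMap.coe_mk, ContinuousMap.const_apply, norm_smul,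
      Real.norm_eq_abs, abs_exp, add_zero]
    exact mul_le_of_le_one_right (exp_pos _).le hone

lemma eventually_expNormBounds_scale_idC [CompactSpace X] (f : C(X, ℝ)) {ε : ℝ} (hε : 0 < ε) :
    ∀ᶠ B in 𝓝 (scale f (idC X d)), ExpNormBounds f ε B := by
  have h₀ := expNormBounds_scale_idC (d := d) f
  have h₁ := (continuous_fst.comp continuous_subtype_val).continuousAt.eventually
    (eventually_forall_norm_le_exp_add (g := f) (fun x => by simpa using (h₀ x).1) hε)
  have h₂ := (continuous_snd.comp continuous_subtype_val).continuousAt.eventually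
    (eventually_forall_norm_le_exp_add (g := -f) (fun x => by simpa using (h₀ x).2) hε)
  filter_upwards [h₁, h₂] with B hB₁ hB₂ x using ⟨hB₁ x, hB₂ x⟩

end ScalarCocycle

lemma betaL_scale_idC {X : Type*} [TopologicalSpace X] [CompactSpace X] [MeasurableSpace X]
    [BorelSpace X] {d : ℕ} [NeZero d] {T : X → X} (hT : Continuous T)
    {Λ : Set (ProbabilityMeasure X)} (hΛ : Λ ⊆ invM T) (f : C(X, ℝ)) :
    betaL T Λ (scale f (idC X d)) = ⨆ μ : Λ, ∫ x, f x ∂((μ : ProbabilityMeasure X) : Measure X) :=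
  sub_eq_zero.1 <| abs_nonpos_iff.1 <|
    (expNormBounds_scale_idC f).abs_betaL_sub_iSup_integral_le hT hΛ le_rfl

theorem stmt9_general {X : Type*} [MetricSpace X] [CompactSpace X] [MeasurableSpace X] [BorelSpace X]
    {d : ℕ} (T : X → X) (hT : Continuous T)
    (Λ : Set (MeasureTheory.ProbabilityMeasure X))
    (hinv : Λ ⊆ invM T)
    (f : C(X, ℝ)) :
    ContinuousAt (betaL T Λ (d := d)) (scale f (idC X d)) := by
  obtain rfl | hd := eq_or_ne d 0
  · have : Subsingleton (GLC X 0) := by unfold GLC; infer_instance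
    exact (continuous_of_const fun B B' => congrArg _ (Subsingleton.elim B B')).continuousAt
  have : NeZero d := ⟨hd⟩
  refine Metric.tendsto_nhds.2 fun ε hε => ?_
  filter_upwards [eventually_expNormBounds_scale_idC f (half_pos hε)] with B hB
  rw [Real.dist_eq, betaL_scale_idC hT hinv]
  exact (hB.abs_betaL_sub_iSup_integral_le hT hinv (half_pos hε).le).trans_lt (half_lt_self hε)

/-- `β^Λ` is continuous at every cocycle of the form `x ↦ e^{f(x)} I_d`. -/
theorem stmt9 {X : Type*} [MetricSpace X] [CompactSpace X] [MeasurableSpace X] [BorelSpace X]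
    {d : ℕ} (T : X → X) (hT : Continuous T)
    (Λ : Set (MeasureTheory.ProbabilityMeasure X))
    (hne : Λ.Nonempty) (hcomp : IsCompact Λ) (hinv : Λ ⊆ invM T)
    (f : C(X, ℝ)) :
    ContinuousAt (betaL T Λ (d := d)) (scale f (idC X d)) :=
  stmt9_general T hT Λ hinv f
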